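/- For every λ ∈ ℂ with λ ≠ 0 and every μ, α ∈ ℂ, there exist c ∈ ℂ with c ≠ 0, θ ∈ ℝ, a ∈ ℂ, and b ∈ ℝ with b ≥ 0, such that for all z ∈ ℂ: (λ z + μ) e^{α z − |z|²/2} = c · v_b(e^{iθ} z + a) · exp((\overline{e^{iθ} z} · a − e^{iθ} z · \overline{a})/2), where v_b(w) = (w − b(2+b²)/(1+b²)) exp(−|w|²/2 + (b/(1+b²)) w). -/

import Mathlib

/-- The (unnormalized) stationary profile
`v_b(w) = (w - b(2+b²)/(1+b²)) e^{-|w|²/2 + (b/(1+b²)) w}`. -/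
noncomputable def vB (b : ℝ) (w : ℂ) : ℂ :=
  (w - ((b * (2 + b ^ 2) / (1 + b ^ 2) : ℝ) : ℂ)) *
    Complex.exp (-(‖w‖ : ℂ) ^ 2 / 2 + ((b / (1 + b ^ 2) : ℝ) : ℂ) * w)

/-!
Write `β_b = b(2+b²)/(1+b²)` (`vBShift`) and `γ_b = b/(1+b²)` (`vBFreq`), so `γ_b - β_b = -b`.
For `|e| = 1` the magnetic phase cancels the cross term `ē z̄ a` of `|e z + a|²`, hence
`v_b(e z + a) e^{(conj(e z) a - e z ā)/2}` is a constant times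
`(z + ē (a - β_b)) e^{e (γ_b - ā) z - |z|²/2}`. Matching the rate `α` forces `a = γ_b - ᾱ e`, and
then matching `μ/λ` reads `(μ/λ + ᾱ) e = -b`: take `b = |μ/λ + ᾱ|` and `e = e^{iθ}` the phase
turning `μ/λ + ᾱ` onto the negative real axis.
-/

open Complex ComplexConjugate

noncomputable def vBShift (b : ℝ) : ℝ := b * (2 + b ^ 2) / (1 + b ^ 2)

noncomputable def vBFreq (b : ℝ) : ℝ := b / (1 + b ^ 2)

lemma vB_eq (b : ℝ) (w : ℂ) :
    vB b w = (w - vBShift b) * exp (-(‖w‖ : ℂ) ^ 2 / 2 + vBFreq b * w) := rfl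

lemma vBFreq_sub_vBShift (b : ℝ) : vBFreq b - vBShift b = -b := by
  have : (1 : ℝ) + b ^ 2 ≠ 0 := by positivity
  rw [vBFreq, vBShift]
  field_simp
  ring

lemma exists_mul_exp_mul_I_eq_neg_norm (s : ℂ) : ∃ θ : ℝ, s * exp (θ * I) = -‖s‖ := by
  refine ⟨-arg (-s), ?_⟩
  have hpolar := norm_mul_exp_arg_mul_I (-s)
  rw [norm_neg] at hpolar
  calc s * exp (↑(-arg (-s)) * I)
      = -(‖s‖ * exp (arg (-s) * I)) * exp (-(arg (-s) * I)) := by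
        rw [hpolar]; push_cast; ring_nf
    _ = -‖s‖ := by
        rw [neg_mul, mul_assoc, ← exp_add, add_neg_cancel, exp_zero, mul_one]

lemma neg_sq_norm_add_magnetic_phase {e : ℂ} (he : ‖e‖ = 1) (a z : ℂ) :
    -(‖e * z + a‖ : ℂ) ^ 2 / 2 + (conj (e * z) * a - e * z * conj a) / 2 =
      e * (-conj a) * z - (‖z‖ : ℂ) ^ 2 / 2 - (‖a‖ : ℂ) ^ 2 / 2 := by
  have hunit : e * conj e = 1 := by rw [mul_conj', he]; simp
  rw [← mul_conj', ← mul_conj', ← mul_conj', map_add, map_mul]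
  linear_combination (-(z * conj z) / 2) * hunit

lemma vB_rotate_translate_mul_magnetic_phase (b : ℝ) {e : ℂ} (he : ‖e‖ = 1) (a z : ℂ) :
    vB b (e * z + a) * exp ((conj (e * z) * a - e * z * conj a) / 2) =
      e * exp (vBFreq b * a - (‖a‖ : ℂ) ^ 2 / 2) *
        ((z + conj e * (a - vBShift b)) * exp (e * (vBFreq b - conj a) * z - (‖z‖ : ℂ) ^ 2 / 2)) := by
  have hunit : conj e * e = 1 := by rw [conj_mul', he]; simp
  have hexponent := neg_sq_norm_add_magnetic_phase he a z
  calc vB b (e * z + a) * exp ((conj (e * z) * a - e * z * conj a) / 2)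
      = e * (z + conj e * (a - vBShift b)) *
          exp ((vBFreq b * a - (‖a‖ : ℂ) ^ 2 / 2) +
            (e * (vBFreq b - conj a) * z - (‖z‖ : ℂ) ^ 2 / 2)) := by
        rw [vB_eq, mul_assoc, ← exp_add]
        congr 2
        · linear_combination (-(a - vBShift b)) * hunit
        · linear_combination hexponent
    _ = _ := by rw [exp_add]; ring

/-- **The manifold `{(λz+μ)e^{αz-|z|²/2}}` consists of stationary profiles.**
Every `(λz+μ)e^{αz-|z|²/2}` with `λ ≠ 0` equals, up to a nonzero constant multiple,
a space rotation `L_θ` and a magnetic translation `R_a`, the profile `v_b` for some `b ≥ 0`. -/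
theorem line_profile_is_rotated_translated_vB (lam : ℂ) (hlam : lam ≠ 0) (mu alph : ℂ) :
    ∃ c : ℂ, c ≠ 0 ∧ ∃ (θ : ℝ) (a : ℂ) (b : ℝ), 0 ≤ b ∧
      ∀ z : ℂ,
        (lam * z + mu) * Complex.exp (alph * z - (‖z‖ : ℂ) ^ 2 / 2) =
          c * vB b (Complex.exp (θ * Complex.I) * z + a) *
            Complex.exp (((starRingEnd ℂ) (Complex.exp (θ * Complex.I) * z) * a -
              Complex.exp (θ * Complex.I) * z * (starRingEnd ℂ) a) / 2) := by
  obtain ⟨θ, hθ⟩ := exists_mul_exp_mul_I_eq_neg_norm (mu / lam + conj alph)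
  set e := exp (θ * I)
  set b := ‖mu / lam + conj alph‖
  set a : ℂ := vBFreq b - conj alph * e
  have he : ‖e‖ = 1 := norm_exp_ofReal_mul_I θ
  have hunit : conj e * e = 1 := by rw [conj_mul', he]; simp
  have hrate : e * (vBFreq b - conj a) = alph := by
    simp only [a, map_sub, map_mul, conj_ofReal, conj_conj]
    linear_combination alph * hunit
  have hshift : conj e * (a - vBShift b) = mu / lam := by
    have hfs : (vBFreq b : ℂ) - vBShift b = -b := by exact_mod_cast vBFreq_sub_vBShift b
    linear_combination (mu / lam) * hunit - conj e * hθ + conj e * hfs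
  set X : ℂ := vBFreq b * a - (‖a‖ : ℂ) ^ 2 / 2
  refine ⟨lam * conj e * exp (-X), by simp [hlam, e, exp_ne_zero], θ, a, b, norm_nonneg _,
    fun z => ?_⟩
  set E := exp (alph * z - (‖z‖ : ℂ) ^ 2 / 2)
  have hexp : exp (-X) * exp X = 1 := by rw [← exp_add, neg_add_cancel, exp_zero]
  have hdiv : lam * (mu / lam) = mu := mul_div_cancel₀ mu hlam
  rw [mul_assoc, vB_rotate_translate_mul_magnetic_phase b he, hrate, hshift]
  linear_combination (-(lam * (z + mu / lam) * E)) * hunit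
    - lam * (z + mu / lam) * E * conj e * e * hexp - E * hdiv
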